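/- arXiv:1104.0580 — 4 statements merged into one kernel-verified Lean document; each statement's English description precedes it below -/
import Mathlib

section
/- Consider the uncoupled four-pendulum system ẍ_i + sin x_i = 0 and points q = (x₁,…,x₄), q′ = (x₁′,…,x₄′) ∈ ℝ⁴ with admissible coordinate pairs, and let T(q, q′) be the unique time for which the connecting solution has total energy 1, with component energies E_i. Set K_i = ( ∫_{x_i}^{x_i′} dx/(2(E_i − V(x)))^{3/2} )^{−1} and K = Σ_{s=1}^{4} K_s. Then for each i, ∂_{x_i} T(q, q′) = K^{−1} · ∂_T Ẋ_i(0; x_i, x_i′, T) evaluated at T = T(q, q′); equivalently, ∂_{x_i} T(q, q′) = −K^{−1} K_i / √(2(E_i − V(x_i))). -/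
/-- The pendulum potential `V(x) = −cos x − 1`. -/
noncomputable def Vpend (x : ℝ) : ℝ := -Real.cos x - 1

open Topology Filter

lemma Vpend_nonpos (x : ℝ) : Vpend x ≤ 0 := by
  have := Real.neg_one_le_cos x; unfold Vpend; linarith
lemma Vpend_cont : Continuous Vpend := by unfold Vpend; continuity
lemma base_pos {e : ℝ} (he : 0 < e) (x : ℝ) : 0 < 2 * (e - Vpend x) := by
  have := Vpend_nonpos x; linarith
lemma base_ge {e e0 : ℝ} (he : e0 / 2 ≤ e) (x : ℝ) :
    e0 ≤ 2 * (e - Vpend x) := by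
  have := Vpend_nonpos x; linarith
lemma cont_h {e : ℝ} (he : 0 < e) (p : ℝ) :
    Continuous fun x => (2 * (e - Vpend x)) ^ p := by
  apply Continuous.rpow_const
  · exact continuous_const.mul (continuous_const.sub Vpend_cont)
  · intro x; exact Or.inl (base_pos he x).ne'
lemma hasDerivAt_h (x : ℝ) {e : ℝ} (he : 0 < e) :
    HasDerivAt (fun u => (2 * (u - Vpend x)) ^ (-(1:ℝ)/2))
      (-(2 * (e - Vpend x)) ^ (-(3:ℝ)/2)) e := by
  have h1 : HasDerivAt (fun u : ℝ => 2 * (u - Vpend x)) 2 e := by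
    simpa using ((hasDerivAt_id e).sub_const (Vpend x)).const_mul 2
  have h2 := h1.rpow_const (p := -(1:ℝ)/2) (Or.inl (base_pos he x).ne')
  convert h2 using 1
  rw [show (-(1:ℝ)/2 - 1) = -(3:ℝ)/2 by norm_num]
  ring

lemma h3_bound {e e0 : ℝ} (he0 : 0 < e0) (he : e0 / 2 ≤ e) (x : ℝ) :
    ‖-(2 * (e - Vpend x)) ^ (-(3:ℝ)/2)‖ ≤ e0 ^ (-(3:ℝ)/2) := by
  rw [norm_neg, Real.norm_eq_abs,
    abs_of_pos (Real.rpow_pos_of_pos (base_pos (lt_of_lt_of_le (half_pos he0) he) x) _)]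
  exact Real.rpow_le_rpow_of_nonpos he0 (base_ge he x) (by norm_num)

lemma h_lip {e0 : ℝ} (he0 : 0 < e0) (x : ℝ) {e : ℝ} (he : e0 / 2 ≤ e) :
    |(2 * (e - Vpend x)) ^ (-(1:ℝ)/2) - (2 * (e0 - Vpend x)) ^ (-(1:ℝ)/2)|
      ≤ e0 ^ (-(3:ℝ)/2) * |e - e0| := by
  have hconv : Convex ℝ (Set.Ici (e0 / 2)) := convex_Ici _
  have := hconv.norm_image_sub_le_of_norm_hasDerivWithin_le
    (f := fun u => (2 * (u - Vpend x)) ^ (-(1:ℝ)/2))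
    (f' := fun u => -(2 * (u - Vpend x)) ^ (-(3:ℝ)/2))
    (C := e0 ^ (-(3:ℝ)/2)) (x := e0) (y := e)
    (fun u hu => (hasDerivAt_h x (lt_of_lt_of_le (half_pos he0) hu)).hasDerivWithinAt)
    (fun u hu => h3_bound he0 hu x)
    (Set.mem_Ici.2 (by linarith)) (Set.mem_Ici.2 he)
  simpa [Real.norm_eq_abs] using this

open intervalIntegral in
lemma lemA {a0 b0 e0 : ℝ} (he0 : 0 < e0) :
    HasDerivAt (fun e => ∫ x in a0..b0, (2 * (e - Vpend x)) ^ (-(1:ℝ)/2))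
      (∫ x in a0..b0, -(2 * (e0 - Vpend x)) ^ (-(3:ℝ)/2)) e0 := by
  have hball : ∀ e ∈ Metric.ball e0 (e0 / 2), e0 / 2 ≤ e := by
    intro e he
    rw [Metric.mem_ball, Real.dist_eq, abs_lt] at he
    linarith [he.1]
  have := intervalIntegral.hasDerivAt_integral_of_dominated_loc_of_deriv_le
    (𝕜 := ℝ) (μ := MeasureTheory.volume) (a := a0) (b := b0)
    (F := fun e x => (2 * (e - Vpend x)) ^ (-(1:ℝ)/2))
    (F' := fun e x => -(2 * (e - Vpend x)) ^ (-(3:ℝ)/2))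
    (bound := fun _ => e0 ^ (-(3:ℝ)/2)) (x₀ := e0)
    (Metric.ball_mem_nhds e0 (half_pos he0))
    ?_ ?_ ?_ ?_ ?_ ?_
  · exact this.2
  · filter_upwards [Ioi_mem_nhds he0] with e he
    exact (cont_h he _).aestronglyMeasurable
  · exact (cont_h he0 _).intervalIntegrable _ _
  · exact ((cont_h he0 _).neg).aestronglyMeasurable
  · refine MeasureTheory.ae_of_all _ fun t _ e he => ?_
    exact h3_bound he0 (hball e he) t
  · exact intervalIntegrable_const
  · refine MeasureTheory.ae_of_all _ fun t _ e he => ?_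
    exact hasDerivAt_h t (lt_of_lt_of_le (half_pos he0) (hball e he))

open intervalIntegral MeasureTheory in
lemma lemB {y0 b e0 c : ℝ} (he0 : 0 < e0) {ε : ℝ → ℝ} (hε : HasDerivAt ε c 0)
    (hε0 : ε 0 = e0) :
    HasDerivAt (fun t => ∫ x in (y0 + t)..b, (2 * (ε t - Vpend x)) ^ (-(1:ℝ)/2))
      ((∫ x in y0..b, -(2 * (e0 - Vpend x)) ^ (-(3:ℝ)/2)) * c
        - (2 * (e0 - Vpend y0)) ^ (-(1:ℝ)/2)) 0 := by
  have hg : HasDerivAt (fun e => ∫ x in y0..b, (2 * (e - Vpend x)) ^ (-(1:ℝ)/2))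
      (∫ x in y0..b, -(2 * (e0 - Vpend x)) ^ (-(3:ℝ)/2)) (ε 0) := by
    rw [hε0]; exact lemA he0
  have hA : HasDerivAt (fun t => ∫ x in y0..b, (2 * (ε t - Vpend x)) ^ (-(1:ℝ)/2))
      ((∫ x in y0..b, -(2 * (e0 - Vpend x)) ^ (-(3:ℝ)/2)) * c) 0 := hg.comp 0 hε
  -- D part
  have hD : HasDerivAt (fun t => ∫ x in y0..(y0 + t), (2 * (e0 - Vpend x)) ^ (-(1:ℝ)/2))
      ((2 * (e0 - Vpend y0)) ^ (-(1:ℝ)/2)) 0 := by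
    have h2 : HasDerivAt (fun t : ℝ => y0 + t) 1 0 := (hasDerivAt_id 0).const_add y0
    have h1 : HasDerivAt (fun u => ∫ x in y0..u, (2 * (e0 - Vpend x)) ^ (-(1:ℝ)/2))
        ((2 * (e0 - Vpend y0)) ^ (-(1:ℝ)/2)) ((fun t : ℝ => y0 + t) 0) := by
      simp only [add_zero]
      exact ((cont_h he0 (-(1:ℝ)/2)).integral_hasStrictDerivAt y0 y0).hasDerivAt
    have := h1.comp 0 h2; rw [mul_one] at this; exact this
  have htend : Filter.Tendsto ε (𝓝 0) (𝓝 e0) := hε0 ▸ hε.continuousAt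
  -- R part
  have hR : HasDerivAt (fun t => ∫ x in y0..(y0 + t),
      ((2 * (ε t - Vpend x)) ^ (-(1:ℝ)/2) - (2 * (e0 - Vpend x)) ^ (-(1:ℝ)/2))) 0 0 := by
    rw [hasDerivAt_iff_isLittleO]
    simp only [add_zero, sub_zero, smul_zero, intervalIntegral.integral_same]
    rw [Asymptotics.isLittleO_iff]
    intro C hC
    set M : ℝ := e0 ^ (-(3:ℝ)/2) with hM
    have hMpos : 0 < M := Real.rpow_pos_of_pos he0 _
    have hr : 0 < min (e0 / 2) (C / M) := lt_min (half_pos he0) (div_pos hC hMpos)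
    filter_upwards [Metric.tendsto_nhds.1 htend _ hr] with t ht
    have h1 : e0 / 2 ≤ ε t := by
      have := (abs_lt.1 (lt_of_lt_of_le ht (min_le_left _ _))).1
      rw [Real.dist_eq] at ht
      have := (abs_lt.1 (lt_of_lt_of_le ht (min_le_left _ _))).1
      linarith
    have h2 : |ε t - e0| ≤ C / M := by
      rw [Real.dist_eq] at ht
      exact le_of_lt (lt_of_lt_of_le ht (min_le_right _ _))
    have hbd : ∀ x ∈ Set.uIoc y0 (y0 + t),
        ‖(2 * (ε t - Vpend x)) ^ (-(1:ℝ)/2) - (2 * (e0 - Vpend x)) ^ (-(1:ℝ)/2)‖ ≤ C := by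
      intro x _
      rw [Real.norm_eq_abs]
      calc |(2 * (ε t - Vpend x)) ^ (-(1:ℝ)/2) - (2 * (e0 - Vpend x)) ^ (-(1:ℝ)/2)|
          ≤ M * |ε t - e0| := h_lip he0 x h1
        _ ≤ M * (C / M) := by gcongr
        _ = C := by field_simp
    calc ‖∫ x in y0..(y0 + t),
          ((2 * (ε t - Vpend x)) ^ (-(1:ℝ)/2) - (2 * (e0 - Vpend x)) ^ (-(1:ℝ)/2))‖
        ≤ C * |y0 + t - y0| := intervalIntegral.norm_integral_le_of_norm_le_const hbd
      _ = C * ‖t‖ := by rw [Real.norm_eq_abs]; ring_nf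
  -- combine
  have hEq : ∀ᶠ t in 𝓝 (0:ℝ),
      (∫ x in (y0 + t)..b, (2 * (ε t - Vpend x)) ^ (-(1:ℝ)/2)) =
        (∫ x in y0..b, (2 * (ε t - Vpend x)) ^ (-(1:ℝ)/2)) -
          ((∫ x in y0..(y0 + t), (2 * (e0 - Vpend x)) ^ (-(1:ℝ)/2)) +
            ∫ x in y0..(y0 + t),
              ((2 * (ε t - Vpend x)) ^ (-(1:ℝ)/2) - (2 * (e0 - Vpend x)) ^ (-(1:ℝ)/2))) := by
    filter_upwards [htend.eventually (eventually_gt_nhds he0)] with t ht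
    have hint : ∀ u v : ℝ, IntervalIntegrable
        (fun x => (2 * (ε t - Vpend x)) ^ (-(1:ℝ)/2)) MeasureTheory.volume u v :=
      fun u v => (cont_h ht _).intervalIntegrable u v
    have hint0 : ∀ u v : ℝ, IntervalIntegrable
        (fun x => (2 * (e0 - Vpend x)) ^ (-(1:ℝ)/2)) MeasureTheory.volume u v :=
      fun u v => (cont_h he0 _).intervalIntegrable u v
    have hadd := intervalIntegral.integral_add_adjacent_intervals
      (hint y0 (y0 + t)) (hint (y0 + t) b)
    have hsplit : (∫ x in y0..(y0 + t), (2 * (ε t - Vpend x)) ^ (-(1:ℝ)/2)) =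
        (∫ x in y0..(y0 + t), (2 * (e0 - Vpend x)) ^ (-(1:ℝ)/2)) +
          ∫ x in y0..(y0 + t),
            ((2 * (ε t - Vpend x)) ^ (-(1:ℝ)/2) - (2 * (e0 - Vpend x)) ^ (-(1:ℝ)/2)) := by
      rw [← intervalIntegral.integral_add (hint0 y0 (y0 + t)) ((hint y0 (y0+t)).sub (hint0 y0 (y0+t)))]
      exact intervalIntegral.integral_congr fun x _ => by ring
    rw [← hsplit]
    linarith [hadd]
  have := (hA.sub (hD.add hR)).congr_of_eventuallyEq hEq
  refine this.congr_deriv ?_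
  ring

/-- **Derivative of the energy-one time with respect to an endpoint coordinate.**
For the uncoupled four-pendulum system, fix the right endpoint `q′` and let,
on an open set `U` of left endpoints `q`, `T q > 0` be the (smooth) time for
which the connecting solution has total energy `1`, with smooth component
energies `Ei i q > 0` satisfying `∑ᵢ Ei i q = 1` and the time-of-travel
identities `T q = ∫_{qᵢ}^{q′ᵢ} dx/√(2(Ei i q − V(x)))`.  Then, with
`Kᵢ = (∫_{qᵢ}^{q′ᵢ} dx/(2(Eᵢ − V(x)))^{3/2})⁻¹` and `K = ∑ₛ Kₛ`,
`∂_{xᵢ} T(q, q′) = −K⁻¹ Kᵢ / √(2(Eᵢ − V(xᵢ)))`. -/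
theorem time_endpoint_derivative (q' : Fin 4 → ℝ) (U : Set (Fin 4 → ℝ))
    (hU : IsOpen U)
    (T : (Fin 4 → ℝ) → ℝ) (Ei : Fin 4 → (Fin 4 → ℝ) → ℝ)
    (hT : ContDiffOn ℝ (⊤ : ℕ∞) T U) (hEi : ∀ i, ContDiffOn ℝ (⊤ : ℕ∞) (Ei i) U)
    (hTpos : ∀ q ∈ U, 0 < T q)
    (hmono : ∀ q ∈ U, ∀ i, q i < q' i)
    (hEpos : ∀ q ∈ U, ∀ i, 0 < Ei i q)
    (hsum : ∀ q ∈ U, (∑ i, Ei i q) = 1)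
    (htime : ∀ q ∈ U, ∀ i,
      T q = ∫ x in (q i)..(q' i), (2 * (Ei i q - Vpend x)) ^ (-(1:ℝ)/2)) :
    ∀ q ∈ U, ∀ i,
      fderiv ℝ T q (Pi.single i 1) =
        -((∑ s, (∫ x in (q s)..(q' s), (2 * (Ei s q - Vpend x)) ^ (-(3:ℝ)/2))⁻¹)⁻¹ *
            (∫ x in (q i)..(q' i), (2 * (Ei i q - Vpend x)) ^ (-(3:ℝ)/2))⁻¹) /
          Real.sqrt (2 * (Ei i q - Vpend (q i))) := by
  intro q hq i
  classical
  set v : Fin 4 → ℝ := Pi.single i 1 with hv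
  set γ : ℝ → (Fin 4 → ℝ) := fun t => q + t • v with hγdef
  have hγ0 : γ 0 = q := by simp [hγdef]
  have hγcont : Continuous γ := by
    apply continuous_const.add
    exact (continuous_id.smul continuous_const)
  have hγderiv : HasDerivAt γ v 0 := by
    have := ((hasDerivAt_id (0:ℝ)).smul_const v).const_add q; rw [one_smul] at this; exact this
  have hmemU : ∀ᶠ t in 𝓝 (0:ℝ), γ t ∈ U :=
    hγcont.continuousAt.eventually_mem (by rw [hγ0]; exact hU.mem_nhds hq)
  -- derivatives along γ
  have hTdiff : DifferentiableAt ℝ T q :=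
    (hT.contDiffAt (hU.mem_nhds hq)).differentiableAt (by simp)
  set a : ℝ := fderiv ℝ T q v with ha
  have hφ : HasDerivAt (fun t => T (γ t)) a 0 := by
    have h1 := hTdiff.hasFDerivAt
    rw [← hγ0] at h1
    have h3 := h1.comp_hasDerivAt 0 hγderiv; simp only [hγ0] at h3; exact h3
  set c : Fin 4 → ℝ := fun s => fderiv ℝ (Ei s) q v with hc
  have hεs : ∀ s, HasDerivAt (fun t => Ei s (γ t)) (c s) 0 := by
    intro s
    have h1 := (((hEi s).contDiffAt (hU.mem_nhds hq)).differentiableAt (by simp)).hasFDerivAt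
    rw [← hγ0] at h1
    have h3 := h1.comp_hasDerivAt 0 hγderiv; simp only [hγ0] at h3; exact h3
  -- coordinates of γ
  have hγs : ∀ t, ∀ s, s ≠ i → γ t s = q s := by
    intro t s hs
    simp [hγdef, hv, Pi.single_eq_of_ne hs]
  have hγi : ∀ t, γ t i = q i + t := by
    intro t
    simp [hγdef, hv]
  -- sum of derivatives is zero
  have hc0 : ∑ s, c s = 0 := by
    have hsumd : HasDerivAt (fun t => ∑ s, Ei s (γ t)) (∑ s, c s) 0 :=
      HasDerivAt.fun_sum fun s _ => hεs s
    have hconst : HasDerivAt (fun _ : ℝ => (1:ℝ)) (∑ s, c s) 0 := by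
      refine hsumd.congr_of_eventuallyEq ?_
      filter_upwards [hmemU] with t ht
      exact (hsum _ ht).symm
    exact hconst.unique (hasDerivAt_const 0 1)
  -- J values
  set J : Fin 4 → ℝ := fun s => ∫ x in (q s)..(q' s),
    (2 * (Ei s q - Vpend x)) ^ (-(3:ℝ)/2) with hJ
  have hJpos : ∀ s, 0 < J s := by
    intro s
    refine intervalIntegral.intervalIntegral_pos_of_pos_on
      ((cont_h (hEpos q hq s) _).intervalIntegrable _ _) ?_ (hmono q hq s)
    intro x _
    exact Real.rpow_pos_of_pos (base_pos (hEpos q hq s) x) _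
  have hJneg : ∀ s, (∫ x in (q s)..(q' s), -(2 * (Ei s q - Vpend x)) ^ (-(3:ℝ)/2)) = -J s := by
    intro s
    rw [hJ]
    exact intervalIntegral.integral_neg
  -- equation for s ≠ i
  have eq_s : ∀ s, s ≠ i → a = -J s * c s := by
    intro s hs
    have hg : HasDerivAt (fun e => ∫ x in (q s)..(q' s), (2 * (e - Vpend x)) ^ (-(1:ℝ)/2))
        (∫ x in (q s)..(q' s), -(2 * (Ei s q - Vpend x)) ^ (-(3:ℝ)/2)) (Ei s (γ 0)) := by
      rw [hγ0]; exact lemA (hEpos q hq s)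
    have hRHS := hg.comp 0 (hεs s)
    have hφ2 : HasDerivAt (fun t => T (γ t))
        ((∫ x in (q s)..(q' s), -(2 * (Ei s q - Vpend x)) ^ (-(3:ℝ)/2)) * c s) 0 := by
      refine hRHS.congr_of_eventuallyEq ?_
      filter_upwards [hmemU] with t ht
      have := htime (γ t) ht s
      rw [hγs t s hs] at this
      exact this
    have := hφ.unique hφ2
    rw [hJneg s] at this
    exact this
  -- equation for i
  have eq_i : a = -J i * c i - (2 * (Ei i q - Vpend (q i))) ^ (-(1:ℝ)/2) := by
    have hε0 : Ei i (γ 0) = Ei i q := by rw [hγ0]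
    have hRHS := lemB (y0 := q i) (b := q' i) (hEpos q hq i) (hεs i) hε0
    have hφ2 : HasDerivAt (fun t => T (γ t))
        ((∫ x in (q i)..(q' i), -(2 * (Ei i q - Vpend x)) ^ (-(3:ℝ)/2)) * c i
          - (2 * (Ei i q - Vpend (q i))) ^ (-(1:ℝ)/2)) 0 := by
      refine hRHS.congr_of_eventuallyEq ?_
      filter_upwards [hmemU] with t ht
      have := htime (γ t) ht i
      rw [hγi t] at this
      exact this
    have := hφ.unique hφ2
    rw [hJneg i] at this
    exact this
  -- algebra
  set f : ℝ := (2 * (Ei i q - Vpend (q i))) ^ (-(1:ℝ)/2) with hfdef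
  set S : ℝ := ∑ s, (J s)⁻¹ with hS
  have hSpos : 0 < S := Finset.sum_pos (fun s _ => inv_pos.2 (hJpos s)) ⟨i, Finset.mem_univ i⟩
  have hcs : ∀ s, c s = -a / J s + (if s = i then -(f / J i) else 0) := by
    intro s
    by_cases hsi : s = i
    · subst hsi
      rw [if_pos rfl]
      have hJne := (hJpos s).ne'
      rw [show -a / J s + -(f / J s) = (-a - f) / J s by ring, eq_div_iff hJne]
      linear_combination eq_i
    · rw [if_neg hsi, add_zero, eq_div_iff (hJpos s).ne']
      linear_combination eq_s s hsi
  have hkey : -a * S - f / J i = 0 := by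
    have h1 : ∑ s, c s = ∑ s, (-a / J s) + ∑ s, (if s = i then -(f / J i) else 0) := by
      rw [← Finset.sum_add_distrib]
      exact Finset.sum_congr rfl fun s _ => hcs s
    rw [hc0] at h1
    rw [Finset.sum_ite_eq' Finset.univ i (fun _ => -(f / J i))] at h1
    simp only [Finset.mem_univ, if_pos] at h1
    have h2 : ∑ s, (-a / J s) = -a * S := by
      rw [hS, Finset.mul_sum]
      exact Finset.sum_congr rfl fun s _ => by rw [div_eq_mul_inv]
    rw [h2] at h1
    linarith
  -- conclude
  have hX : 0 < 2 * (Ei i q - Vpend (q i)) := base_pos (hEpos q hq i) (q i)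
  have hf : f = (Real.sqrt (2 * (Ei i q - Vpend (q i))))⁻¹ := by
    rw [hfdef, show (-(1:ℝ)/2) = -(1/2:ℝ) by norm_num, Real.rpow_neg hX.le,
      ← Real.sqrt_eq_rpow]
  have hsqrt : 0 < Real.sqrt (2 * (Ei i q - Vpend (q i))) := Real.sqrt_pos.2 hX
  show a = -(S⁻¹ * (J i)⁻¹) / Real.sqrt (2 * (Ei i q - Vpend (q i)))
  have ha2 : a = -(f / J i) / S := by
    rw [eq_div_iff hSpos.ne']
    linear_combination -hkey
  rw [ha2, hf]
  ring
end

section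
/- There exist constants c > 0 and T₀ > 0 such that the following holds. For α, β with |α| ≤ 1 and |β − π| < 1, let x(t; T, α, β) be the unique Pendulum-Lemma solution of ẍ + sin x = 0 with x(0) = α, x(T) = β, confined to [α, max(β, π)]. Then for all T ≥ T₀: |∂_T ẋ(0; T, α, β)| ≤ e^{−cT}. (This is the non-winding case |β − α| < 2π: the time-T preimage of the line {x = β} under the pendulum flow converges exponentially to the unstable manifold y = U(x) of the saddle (π, 0), and its motion is exponentially slow.) -/
/-- `IsPendSolOn x v s` : on the set `s`, `x` solves the pendulum equation
`ẍ + sin x = 0`, with velocity `v`. -/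
def IsPendSolOn (x v : ℝ → ℝ) (s : Set ℝ) : Prop :=
  ∀ t ∈ s, HasDerivAt x (v t) t ∧ HasDerivAt v (-Real.sin (x t)) t

/-!
Compare the solutions for two end times `T < s`, with `δ = |ẋ_s(0) - ẋ_T(0)|`. Their energies
differ by at least `δ` (both initial velocities are `≥ 1`), so the phase-space difference
`(w, z) = (x_s - x_T, ẋ_s - ẋ_T)` never gets smaller than `δ / 4`. From time 7 on both orbits lie
within `6 / 5` of the saddle `π`, where `sin` decreases with slope `≤ -1/4`; there the equation
`w'' = -(sin x_s - sin x_T)` is repelling, `w w'` grows first linearly and then like `e^t`, and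
`w(T)² ≳ δ² e^T`. On the other hand `x_s(s) = x_T(T) = β` and `|ẋ_s| ≤ 9/4`, so
`|w(T)| ≤ 9/4 (s - T)`. Hence `δ ≤ e^{-T/4} (s - T)`, which bounds the difference quotients
of `T ↦ ẋ_T(0)` from the right.
-/

open Set Filter Topology Real

section Calculus

variable {f g f' g' : ℝ → ℝ} {a b : ℝ}

lemma sub_le_sub_of_hasDerivAt_le (hab : a ≤ b) (hf : ∀ t ∈ Icc a b, HasDerivAt f (f' t) t)
    (hg : ∀ t ∈ Icc a b, HasDerivAt g (g' t) t) (h : ∀ t ∈ Ioo a b, g' t ≤ f' t) :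
    g b - g a ≤ f b - f a := by
  have hfg : ∀ t ∈ Icc a b, HasDerivAt (fun t => f t - g t) (f' t - g' t) t :=
    fun t ht => (hf t ht).sub (hg t ht)
  have hmono : MonotoneOn (fun t => f t - g t) (Icc a b) := by
    refine monotoneOn_of_hasDerivWithinAt_nonneg (f' := fun t => f' t - g' t) (convex_Icc a b)
      (fun t ht => (hfg t ht).continuousAt.continuousWithinAt) ?_ ?_ <;> rw [interior_Icc]
    · exact fun t ht => (hfg t (Ioo_subset_Icc_self ht)).hasDerivWithinAt
    · exact fun t ht => sub_nonneg.2 (h t ht)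
  linarith [hmono (left_mem_Icc.2 hab) (right_mem_Icc.2 hab) hab]

lemma mul_sub_le_sub_of_le_hasDerivAt {C : ℝ} (hab : a ≤ b)
    (hf : ∀ t ∈ Icc a b, HasDerivAt f (f' t) t) (h : ∀ t ∈ Ioo a b, C ≤ f' t) :
    C * (b - a) ≤ f b - f a := by
  have := sub_le_sub_of_hasDerivAt_le hab hf (fun t _ => (hasDerivAt_id t).const_mul C)
    (by simpa using h)
  simp only [id] at this
  linarith

lemma mul_exp_le_of_mul_le_hasDerivAt {k : ℝ} (hab : a ≤ b)
    (hf : ∀ t ∈ Icc a b, HasDerivAt f (f' t) t) (h : ∀ t ∈ Ioo a b, k * f t ≤ f' t) :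
    f a * exp (k * (b - a)) ≤ f b := by
  have hdamped : ∀ t ∈ Icc a b, HasDerivAt (fun t => f t * exp (-k * (t - a)))
      ((f' t - k * f t) * exp (-k * (t - a))) t := by
    intro t ht
    have hexp : HasDerivAt (fun t => exp (-k * (t - a))) (exp (-k * (t - a)) * -k) t := by
      simpa using (((hasDerivAt_id t).sub_const a).const_mul (-k)).exp
    exact ((hf t ht).mul hexp).congr_deriv (by ring)
  have hmono := sub_le_sub_of_hasDerivAt_le hab hdamped (fun t _ => hasDerivAt_const t 0)
    (fun t ht => mul_nonneg (sub_nonneg.2 (h t ht)) (exp_pos _).le)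
  have hexp : exp (-k * (b - a)) * exp (k * (b - a)) = 1 := by
    rw [← exp_add]; simp
  simp only [sub_self, mul_zero, exp_zero, mul_one] at hmono
  calc f a * exp (k * (b - a)) ≤ f b * exp (-k * (b - a)) * exp (k * (b - a)) :=
        mul_le_mul_of_nonneg_right (by linarith) (exp_pos _).le
    _ = f b := by rw [mul_assoc, hexp, mul_one]

lemma HasDerivAt.eventually_nhdsGT_lt {d : ℝ} (hf : HasDerivAt f d a) (h : d < 0) :
    ∀ᶠ t in 𝓝[>] a, f t < f a := by
  have hslope := (hasDerivWithinAt_iff_tendsto_slope' (by simp : a ∉ Ioi a)).1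
    hf.hasDerivWithinAt
  filter_upwards [hslope.eventually (gt_mem_nhds h), self_mem_nhdsWithin] with t hneg (hat : a < t)
  rw [slope_def_field, div_neg_iff] at hneg
  rcases hneg with h | h <;> linarith [h.1, h.2]

lemma HasDerivAt.eventually_nhdsGT_gt {d : ℝ} (hf : HasDerivAt f d a) (h : 0 < d) :
    ∀ᶠ t in 𝓝[>] a, f a < f t := by
  simpa using hf.neg.eventually_nhdsGT_lt (neg_neg_of_pos h)

lemma le_of_le_abs_of_continuousOn {σ : ℝ} (hσ : 0 < σ) (hf : ContinuousOn f (Icc a b))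
    (habs : ∀ t ∈ Icc a b, σ ≤ |f t|) (ha : 0 ≤ f a) : ∀ t ∈ Icc a b, σ ≤ f t := by
  intro t ht
  by_contra! hlt
  have hneg : f t < 0 := by
    have := habs t ht
    rcases abs_cases (f t) with h | h <;> linarith
  obtain ⟨c, hc, hc0⟩ := intermediate_value_Icc' ht.1 (hf.mono (Icc_subset_Icc_right ht.2))
    ⟨hneg.le, ha⟩
  have := habs c ⟨hc.1, hc.2.trans ht.2⟩
  rw [hc0, abs_zero] at this
  linarith

lemma abs_deriv_le_of_abs_sub_le {C : ℝ} (hC : 0 ≤ C)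
    (h : ∀ b, a < b → |f b - f a| ≤ C * (b - a)) : |deriv f a| ≤ C := by
  by_cases hf : DifferentiableAt ℝ f a
  · have hslope := (hasDerivWithinAt_iff_tendsto_slope' (by simp : a ∉ Ioi a)).1
      hf.hasDerivAt.hasDerivWithinAt
    refine le_of_tendsto hslope.abs ?_
    filter_upwards [self_mem_nhdsWithin] with b (hab : a < b)
    rw [slope_def_field, abs_div, abs_of_pos (sub_pos.2 hab), div_le_iff₀ (sub_pos.2 hab)]
    exact h b hab
  · simpa [deriv_zero_of_not_differentiableAt hf] using hC

end Calculus

lemma cos_six_fifths_le : cos (6 / 5) ≤ 101 / 250 := by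
  have hsin : 273 / 500 < sin (3 / 5) := by
    have := sin_gt_sub_cube (x := 3 / 5) (by norm_num)
    norm_num at this
    linarith
  have hcos : cos (6 / 5) = 1 - 2 * sin (3 / 5) ^ 2 := by
    rw [show (6 / 5 : ℝ) = 2 * (3 / 5) by norm_num, cos_two_mul, cos_sq']
    ring
  nlinarith

lemma cos_le_neg_quarter {y : ℝ} (hy : |y - π| ≤ 6 / 5) : cos y ≤ -1 / 4 := by
  have hcos : cos (y - π) = -cos y := cos_sub_pi y
  have := one_sub_sq_div_two_le_cos (x := y - π)
  nlinarith [sq_abs (y - π), abs_nonneg (y - π)]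

lemma sin_sub_sin_mul_sub_le {a b : ℝ} (ha : |a - π| ≤ 6 / 5) (hb : |b - π| ≤ 6 / 5) :
    (sin a - sin b) * (a - b) ≤ -(a - b) ^ 2 / 4 := by
  have hdecr : ∀ {p q : ℝ}, |p - π| ≤ 6 / 5 → |q - π| ≤ 6 / 5 → p ≤ q →
      1 / 4 * (q - p) ≤ sin p - sin q := by
    intro p q hp hq hpq
    have := mul_sub_le_sub_of_le_hasDerivAt (f := fun y => -sin y) (C := 1 / 4) hpq
      (fun t _ => (hasDerivAt_sin t).neg) fun t ht => ?_
    · linarith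
    rw [abs_le] at hp hq
    linarith [cos_le_neg_quarter (y := t) (abs_le.2 ⟨by linarith [ht.1], by linarith [ht.2]⟩)]
  rcases le_total a b with hab | hba
  · nlinarith [hdecr ha hb hab]
  · nlinarith [hdecr hb ha hba]

noncomputable def pendEnergy (x y : ℝ) : ℝ := y ^ 2 / 2 - cos x - 1

lemma abs_pendEnergy_sub_le (x₁ y₁ x₂ y₂ : ℝ) :
    |pendEnergy x₂ y₂ - pendEnergy x₁ y₁| ≤ (|y₁| + |y₂|) / 2 * |y₂ - y₁| + |x₂ - x₁| := by
  have hsplit : pendEnergy x₂ y₂ - pendEnergy x₁ y₁ =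
      (y₁ + y₂) / 2 * (y₂ - y₁) - (cos x₂ - cos x₁) := by
    unfold pendEnergy; ring
  rw [hsplit]
  calc |(y₁ + y₂) / 2 * (y₂ - y₁) - (cos x₂ - cos x₁)|
      ≤ |(y₁ + y₂) / 2| * |y₂ - y₁| + |cos x₂ - cos x₁| := by
        rw [← abs_mul]; exact abs_sub _ _
    _ ≤ (|y₁| + |y₂|) / 2 * |y₂ - y₁| + |x₂ - x₁| := by
        gcongr ?_ * _ + ?_
        · rw [abs_div, abs_two]; gcongr; exact abs_add_le _ _
        · exact abs_cos_sub_cos_le _ _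

namespace IsPendSolOn

variable {x v x₁ v₁ x₂ v₂ : ℝ → ℝ} {s s' : Set ℝ} {a b : ℝ}

lemma mono (h : IsPendSolOn x v s) (hs : s' ⊆ s) : IsPendSolOn x v s' :=
  fun t ht => h t (hs ht)

lemma continuousOn (h : IsPendSolOn x v s) : ContinuousOn x s :=
  fun t ht => (h t ht).1.continuousAt.continuousWithinAt

lemma continuousOn_velocity (h : IsPendSolOn x v s) : ContinuousOn v s :=
  fun t ht => (h t ht).2.continuousAt.continuousWithinAt

lemma pendEnergy_eq (h : IsPendSolOn x v (Icc a b)) :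
    ∀ t ∈ Icc a b, pendEnergy (x t) (v t) = pendEnergy (x a) (v a) := by
  have hE : ∀ t ∈ Icc a b, HasDerivAt (fun t => pendEnergy (x t) (v t)) 0 t := by
    intro t ht
    have := ((((h t ht).2.pow 2).div_const 2).sub (h t ht).1.cos).sub_const 1
    exact this.congr_deriv (by push_cast; ring)
  exact constant_of_has_deriv_right_zero (fun t ht => (hE t ht).continuousAt.continuousWithinAt)
    fun t ht => (hE t (Ico_subset_Icc_self ht)).hasDerivWithinAt

lemma norm_sub_le_mul_exp (h₁ : IsPendSolOn x₁ v₁ (Icc a b))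
    (h₂ : IsPendSolOn x₂ v₂ (Icc a b)) :
    ∀ t ∈ Icc a b,
      ‖(x₂ t - x₁ t, v₂ t - v₁ t)‖ ≤ ‖(x₂ a - x₁ a, v₂ a - v₁ a)‖ * exp (t - a) := by
  have hd : ∀ t ∈ Icc a b, HasDerivAt (fun t => (x₂ t - x₁ t, v₂ t - v₁ t))
      (v₂ t - v₁ t, -sin (x₂ t) - -sin (x₁ t)) t :=
    fun t ht => ((h₂ t ht).1.sub (h₁ t ht).1).prodMk ((h₂ t ht).2.sub (h₁ t ht).2)
  intro t ht
  have := norm_le_gronwallBound_of_norm_deriv_right_le (K := 1) (ε := 0)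
    (fun t ht => (hd t ht).continuousAt.continuousWithinAt)
    (fun t ht => (hd t (Ico_subset_Icc_self ht)).hasDerivWithinAt) le_rfl ?_ t ht
  · simpa [gronwallBound_ε0] using this
  intro t _
  have hsin : |sin (x₂ t) - sin (x₁ t)| ≤ |x₂ t - x₁ t| := abs_sin_sub_sin_le _ _
  simp only [Prod.norm_def, Real.norm_eq_abs, one_mul, add_zero]
  rw [neg_sub_neg, abs_sub_comm (sin _)]
  exact max_le (le_max_right _ _) (hsin.trans (le_max_left _ _))

end IsPendSolOn

/- If `w'' = f` with `w f ≥ r² w²`, then `(w w')' = w'² + w f ≥ w'² + r² w² ≥ 2 r w w'`. -/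
section Repulsion

variable {w z f : ℝ → ℝ} {a b r : ℝ}

lemma mul_add_le_mul_of_repulsive {m : ℝ} (hab : a ≤ b) (hr : r ^ 2 ≤ 1)
    (hw : ∀ t ∈ Icc a b, HasDerivAt w (z t) t) (hz : ∀ t ∈ Icc a b, HasDerivAt z (f t) t)
    (hf : ∀ t ∈ Icc a b, r ^ 2 * w t ^ 2 ≤ w t * f t)
    (hm : ∀ t ∈ Icc a b, m ≤ w t ^ 2 + z t ^ 2) :
    w a * z a + r ^ 2 * m * (b - a) ≤ w b * z b := by
  have := mul_sub_le_sub_of_le_hasDerivAt (f := fun t => w t * z t) (C := r ^ 2 * m) hab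
    (fun t ht => (hw t ht).mul (hz t ht)) fun t ht => ?_
  · linarith
  have ht := Ioo_subset_Icc_self ht
  nlinarith [hf t ht, hm t ht, sq_nonneg r, sq_nonneg (z t)]

lemma mul_exp_le_mul_of_repulsive (hab : a ≤ b)
    (hw : ∀ t ∈ Icc a b, HasDerivAt w (z t) t) (hz : ∀ t ∈ Icc a b, HasDerivAt z (f t) t)
    (hf : ∀ t ∈ Icc a b, r ^ 2 * w t ^ 2 ≤ w t * f t) :
    w a * z a * exp (2 * r * (b - a)) ≤ w b * z b := by
  refine mul_exp_le_of_mul_le_hasDerivAt (f := fun t => w t * z t) hab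
    (fun t ht => (hw t ht).mul (hz t ht)) fun t ht => ?_
  nlinarith [hf t (Ioo_subset_Icc_self ht), sq_nonneg (z t - r * w t)]

lemma mul_exp_sub_one_le_of_repulsive (hab : a ≤ b) (hr : 0 ≤ r)
    (hw : ∀ t ∈ Icc a b, HasDerivAt w (z t) t) (hz : ∀ t ∈ Icc a b, HasDerivAt z (f t) t)
    (hf : ∀ t ∈ Icc a b, r ^ 2 * w t ^ 2 ≤ w t * f t) :
    w a * z a * (exp (2 * r * (b - a)) - 1) ≤ r * (w b ^ 2 - w a ^ 2) := by
  have hgrowth : ∀ t ∈ Icc a b, w a * z a * exp (2 * r * (t - a)) ≤ w t * z t := by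
    intro t ht
    have hsub : Icc a t ⊆ Icc a b := Icc_subset_Icc_right ht.2
    exact mul_exp_le_mul_of_repulsive ht.1 (fun s hs => hw s (hsub hs))
      (fun s hs => hz s (hsub hs)) (fun s hs => hf s (hsub hs))
  have hexp : ∀ t ∈ Icc a b, HasDerivAt (fun t => w a * z a * exp (2 * r * (t - a)))
      (w a * z a * (exp (2 * r * (t - a)) * (2 * r))) t := by
    intro t _
    have := (((hasDerivAt_id t).sub_const a).const_mul (2 * r)).exp.const_mul (w a * z a)
    simpa using this
  have hsq : ∀ t ∈ Icc a b, HasDerivAt (fun t => r * w t ^ 2) (2 * r * (w t * z t)) t := by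
    intro t ht
    exact (((hw t ht).pow 2).const_mul r).congr_deriv (by push_cast; ring)
  have := sub_le_sub_of_hasDerivAt_le hab hsq hexp fun t ht => ?_
  · simp only [sub_self, mul_zero, exp_zero] at this
    linarith
  nlinarith [hgrowth t (Ioo_subset_Icc_self ht)]

end Repulsion

-- From time 7 on, `w z ≥ -e^{14} δ²` (Gronwall) and `(w z)' ≥ δ² / 64`, so `w z ≥ δ²` by this time.
noncomputable def escapeTime : ℝ := 7 + 64 * (exp 14 + 1)

lemma seven_le_escapeTime : 7 ≤ escapeTime := by
  unfold escapeTime; linarith [exp_pos 14]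

structure IsPendLemmaSol (α β T : ℝ) (x v : ℝ → ℝ) : Prop where
  isPendSolOn : IsPendSolOn x v (Icc 0 T)
  left : x 0 = α
  right : x T = β
  mem_Icc : ∀ t ∈ Icc 0 T, x t ∈ Icc α (max β π)

namespace IsPendLemmaSol

variable {α β T s : ℝ} {x v x₁ v₁ x₂ v₂ : ℝ → ℝ}

lemma pendEnergy_eq (h : IsPendLemmaSol α β T x v) :
    ∀ t ∈ Icc 0 T, pendEnergy (x t) (v t) = pendEnergy α (v 0) := by
  simpa only [h.left] using h.isPendSolOn.pendEnergy_eq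

lemma zero_le_velocity_zero (hT : 0 < T) (h : IsPendLemmaSol α β T x v) : 0 ≤ v 0 := by
  by_contra! hneg
  have hev := ((h.isPendSolOn 0 ⟨le_rfl, hT.le⟩).1.eventually_nhdsGT_lt hneg).and
    (Ioc_mem_nhdsGT hT)
  obtain ⟨t, hxt, ht⟩ := hev.exists
  have := (h.mem_Icc t (Ioc_subset_Icc_self ht)).1
  rw [h.left] at hxt
  linarith

lemma neg_half_le_pendEnergy (hβ : |β - π| < 1) (hT : 0 ≤ T) (h : IsPendLemmaSol α β T x v) :
    -1 / 2 ≤ pendEnergy α (v 0) := by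
  have hE := h.pendEnergy_eq T ⟨hT, le_rfl⟩
  rw [h.right] at hE
  have hcos := one_sub_sq_div_two_le_cos (x := β - π)
  rw [cos_sub_pi] at hcos
  unfold pendEnergy at hE ⊢
  nlinarith [sq_abs (β - π), abs_nonneg (β - π), sq_nonneg (v T)]

lemma pendEnergy_le_half (hα : |α| ≤ 1) (hβ : |β - π| < 1) (hT : 6 ≤ T)
    (h : IsPendLemmaSol α β T x v) : pendEnergy α (v 0) ≤ 1 / 2 := by
  by_contra! hE
  have hfast : ∀ t ∈ Icc 0 T, 1 ≤ |v t| := by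
    intro t ht
    have := h.pendEnergy_eq t ht
    unfold pendEnergy at this hE
    nlinarith [neg_one_le_cos (x t), sq_abs (v t), abs_nonneg (v t)]
  have hv := le_of_le_abs_of_continuousOn one_pos h.isPendSolOn.continuousOn_velocity hfast
    (h.zero_le_velocity_zero (by linarith))
  have := mul_sub_le_sub_of_le_hasDerivAt (by linarith) (fun t ht => (h.isPendSolOn t ht).1)
    fun t ht => hv t (Ioo_subset_Icc_self ht)
  rw [h.left, h.right] at this
  rw [abs_le] at hα
  rw [abs_lt] at hβ
  linarith [pi_lt_d2]

lemma abs_velocity_le (hα : |α| ≤ 1) (hβ : |β - π| < 1) (hT : 6 ≤ T)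
    (h : IsPendLemmaSol α β T x v) : ∀ t ∈ Icc 0 T, |v t| ≤ 9 / 4 := by
  intro t ht
  have hE := h.pendEnergy_le_half hα hβ hT
  rw [← h.pendEnergy_eq t ht] at hE
  unfold pendEnergy at hE
  nlinarith [cos_le_one (x t), sq_abs (v t), abs_nonneg (v t)]

lemma one_le_velocity_zero (hα : |α| ≤ 1) (hβ : |β - π| < 1) (hT : 0 < T)
    (h : IsPendLemmaSol α β T x v) : 1 ≤ v 0 := by
  have hE := h.neg_half_le_pendEnergy hβ hT.le
  have hcos := one_sub_sq_div_two_le_cos (x := α)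
  have hv := h.zero_le_velocity_zero hT
  unfold pendEnergy at hE
  nlinarith [sq_abs α, abs_nonneg α]

lemma le_abs_velocity_of_le (hα : |α| ≤ 1) (hβ : |β - π| < 1) (hT : 0 ≤ T)
    (h : IsPendLemmaSol α β T x v) :
    ∀ t ∈ Icc 0 T, x t ≤ π - 6 / 5 → 43 / 100 ≤ |v t| := by
  intro t ht hxt
  have hE := h.neg_half_le_pendEnergy hβ hT
  rw [← h.pendEnergy_eq t ht] at hE
  have hcos : cos (π - 6 / 5) ≤ cos (x t) := by
    rw [← cos_abs (x t)]
    refine cos_le_cos_of_nonneg_of_le_pi (abs_nonneg _) (by linarith [pi_pos]) ?_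
    rw [abs_le] at hα ⊢
    constructor <;> linarith [(h.mem_Icc t ht).1, pi_gt_three]
  rw [cos_pi_sub] at hcos
  unfold pendEnergy at hE
  nlinarith [cos_six_fifths_le, sq_abs (v t), abs_nonneg (v t)]

lemma le_velocity_of_le (hα : |α| ≤ 1) (hβ : |β - π| < 1) (h : IsPendLemmaSol α β T x v) :
    ∀ t ∈ Icc 0 T, x t ≤ π - 6 / 5 → 43 / 100 ≤ v t := by
  intro t₁ ht₁ hx₁
  have hspeed := h.le_abs_velocity_of_le hα hβ (ht₁.1.trans ht₁.2)
  by_contra! hslow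
  -- Below the level `π - 6 / 5` the speed cannot vanish, so an orbit moving down there keeps
  -- moving down and never reaches `β`.
  let s := (fun u => (x u, v u)) ⁻¹' (Iic (x t₁) ×ˢ Iic 0)
  have hsub : Icc t₁ T ⊆ Icc 0 T := Icc_subset_Icc_left ht₁.1
  have hclosed : IsClosed (s ∩ Icc t₁ T) := by
    rw [inter_comm]
    exact ((h.isPendSolOn.continuousOn.prodMk h.isPendSolOn.continuousOn_velocity).mono
      hsub).preimage_isClosed_of_isClosed isClosed_Icc (isClosed_Iic.prod isClosed_Iic)
  have hv₁ : v t₁ ≤ 0 := by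
    have := hspeed t₁ ht₁ hx₁
    rcases abs_cases (v t₁) with hv | hv <;> linarith
  have hsT : T ∈ s := by
    refine hclosed.Icc_subset_of_forall_mem_nhdsWithin ⟨mem_Iic.2 le_rfl, hv₁⟩ ?_ ⟨ht₁.2, le_rfl⟩
    rintro u ⟨⟨hxu : x u ≤ x t₁, hvu : v u ≤ 0⟩, hu⟩
    have hu' := hsub (Ico_subset_Icc_self hu)
    have hvneg : v u < 0 := by
      have := hspeed u hu' (hxu.trans hx₁)
      rcases abs_cases (v u) with hv | hv <;> linarith
    filter_upwards [(h.isPendSolOn u hu').1.eventually_nhdsGT_lt hvneg,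
      nhdsWithin_le_nhds ((h.isPendSolOn u hu').2.continuousAt.eventually_lt continuousAt_const
        hvneg)] with t hxt hvt
    exact ⟨hxt.le.trans hxu, hvt.le⟩
  have hxT : x T ≤ x t₁ := hsT.1
  rw [h.right] at hxT
  rw [abs_lt] at hβ
  linarith

lemma pi_sub_le (hα : |α| ≤ 1) (hβ : |β - π| < 1) (h : IsPendLemmaSol α β T x v) :
    ∀ t ∈ Icc 7 T, π - 6 / 5 ≤ x t := by
  intro t ht
  have hclimb : ∃ t₀ ∈ Icc 0 7, π - 6 / 5 ≤ x t₀ := by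
    by_contra! hbelow
    have hsub : Icc (0 : ℝ) 7 ⊆ Icc 0 T := Icc_subset_Icc_right (ht.1.trans ht.2)
    have := mul_sub_le_sub_of_le_hasDerivAt (C := 43 / 100) (by norm_num)
      (fun u hu => (h.isPendSolOn u (hsub hu)).1) fun u hu =>
        h.le_velocity_of_le hα hβ u (hsub (Ioo_subset_Icc_self hu))
          (hbelow u (Ioo_subset_Icc_self hu)).le
    have := hbelow 7 ⟨by norm_num, le_rfl⟩
    rw [h.left] at *
    rw [abs_le] at hα
    linarith [pi_lt_d2]
  obtain ⟨t₀, ht₀, hx₀⟩ := hclimb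
  have hsub : Icc t₀ T ⊆ Icc 0 T := Icc_subset_Icc_left ht₀.1
  have hclosed : IsClosed (x ⁻¹' Ici (π - 6 / 5) ∩ Icc t₀ T) := by
    rw [inter_comm]
    exact (h.isPendSolOn.continuousOn.mono hsub).preimage_isClosed_of_isClosed isClosed_Icc
      isClosed_Ici
  refine hclosed.Icc_subset_of_forall_mem_nhdsWithin hx₀ ?_ ⟨ht₀.2.trans ht.1, ht.2⟩
  rintro u ⟨hxu, hu⟩
  have hu' := hsub (Ico_subset_Icc_self hu)
  rcases (show π - 6 / 5 ≤ x u from hxu).lt_or_eq with hlt | heq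
  · filter_upwards [nhdsWithin_le_nhds (continuousAt_const.eventually_lt
      (h.isPendSolOn u hu').1.continuousAt hlt)] with t ht
    exact ht.le
  · have hv := h.le_velocity_of_le hα hβ u hu' heq.ge
    filter_upwards [(h.isPendSolOn u hu').1.eventually_nhdsGT_gt (by linarith)] with t ht
    exact hxu.trans ht.le

lemma abs_sub_pi_le (hα : |α| ≤ 1) (hβ : |β - π| < 1) (h : IsPendLemmaSol α β T x v) :
    ∀ t ∈ Icc 7 T, |x t - π| ≤ 6 / 5 := by
  intro t ht
  have hx := (h.mem_Icc t ⟨by linarith [ht.1], ht.2⟩).2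
  have hlow := h.pi_sub_le hα hβ t ht
  rw [abs_lt] at hβ
  rw [abs_le]
  constructor
  · linarith
  · rcases le_total β π with hβπ | hβπ
    · rw [max_eq_right hβπ] at hx; linarith
    · rw [max_eq_left hβπ] at hx; linarith

lemma sq_velocity_zero_sub_div_le (hα : |α| ≤ 1) (hβ : |β - π| < 1) (hT : 6 ≤ T) (hTs : T ≤ s)
    (h₁ : IsPendLemmaSol α β T x₁ v₁) (h₂ : IsPendLemmaSol α β s x₂ v₂) :
    ∀ t ∈ Icc 0 T, (v₂ 0 - v₁ 0) ^ 2 / 16 ≤ (x₂ t - x₁ t) ^ 2 + (v₂ t - v₁ t) ^ 2 := by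
  intro t ht
  have ht₂ : t ∈ Icc 0 s := ⟨ht.1, ht.2.trans hTs⟩
  have hgap : pendEnergy (x₂ t) (v₂ t) - pendEnergy (x₁ t) (v₁ t) =
      (v₁ 0 + v₂ 0) / 2 * (v₂ 0 - v₁ 0) := by
    rw [h₁.pendEnergy_eq t ht, h₂.pendEnergy_eq t ht₂]
    unfold pendEnergy
    ring
  have hv₁ := h₁.one_le_velocity_zero hα hβ (by linarith)
  have hv₂ := h₂.one_le_velocity_zero hα hβ (by linarith)
  have hlow : |v₂ 0 - v₁ 0| ≤ |pendEnergy (x₂ t) (v₂ t) - pendEnergy (x₁ t) (v₁ t)| := by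
    rw [hgap, abs_mul, abs_of_pos (by linarith : (0 : ℝ) < (v₁ 0 + v₂ 0) / 2)]
    exact le_mul_of_one_le_left (abs_nonneg _) (by linarith)
  have hup := (abs_pendEnergy_sub_le (x₁ t) (v₁ t) (x₂ t) (v₂ t)).trans
    (add_le_add_left (mul_le_mul_of_nonneg_right (show (|v₁ t| + |v₂ t|) / 2 ≤ 9 / 4 by
      linarith [h₁.abs_velocity_le hα hβ hT t ht, h₂.abs_velocity_le hα hβ (hT.trans hTs) t ht₂])
      (abs_nonneg _)) _)
  nlinarith [abs_nonneg (v₂ 0 - v₁ 0), abs_nonneg (x₂ t - x₁ t), abs_nonneg (v₂ t - v₁ t),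
    sq_abs (v₂ 0 - v₁ 0), sq_abs (x₂ t - x₁ t), sq_abs (v₂ t - v₁ t),
    sq_nonneg (|x₂ t - x₁ t| - |v₂ t - v₁ t|)]

lemma sq_velocity_zero_sub_mul_le (hα : |α| ≤ 1) (hβ : |β - π| < 1) (hT : escapeTime ≤ T)
    (hTs : T ≤ s) (h₁ : IsPendLemmaSol α β T x₁ v₁) (h₂ : IsPendLemmaSol α β s x₂ v₂) :
    (v₂ 0 - v₁ 0) ^ 2 * (exp (T - escapeTime) - 1) ≤ (x₂ T - x₁ T) ^ 2 / 2 := by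
  set δ := v₂ 0 - v₁ 0
  set w := fun t => x₂ t - x₁ t
  set z := fun t => v₂ t - v₁ t
  have h7B := seven_le_escapeTime
  have h₂T : IsPendSolOn x₂ v₂ (Icc 0 T) := h₂.isPendSolOn.mono (Icc_subset_Icc_right hTs)
  have hw : ∀ t ∈ Icc 0 T, HasDerivAt w (z t) t :=
    fun t ht => (h₂T t ht).1.sub (h₁.isPendSolOn t ht).1
  have hz : ∀ t ∈ Icc 0 T, HasDerivAt z (-sin (x₂ t) - -sin (x₁ t)) t :=
    fun t ht => (h₂T t ht).2.sub (h₁.isPendSolOn t ht).2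
  have hsub : Icc 7 T ⊆ Icc 0 T := Icc_subset_Icc_left (by norm_num)
  have hrep : ∀ t ∈ Icc 7 T, (1 / 2) ^ 2 * w t ^ 2 ≤ w t * (-sin (x₂ t) - -sin (x₁ t)) := by
    intro t ht
    have := sin_sub_sin_mul_sub_le (h₂.abs_sub_pi_le hα hβ t ⟨ht.1, ht.2.trans hTs⟩)
      (h₁.abs_sub_pi_le hα hβ t ht)
    simp only [w]
    linarith
  have hsep := h₁.sq_velocity_zero_sub_div_le hα hβ (by linarith) hTs h₂
  have hgron : -(exp 14 * δ ^ 2) ≤ w 7 * z 7 := by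
    have h07 : Icc (0 : ℝ) 7 ⊆ Icc 0 T := Icc_subset_Icc_right (by linarith)
    have := (h₁.isPendSolOn.mono h07).norm_sub_le_mul_exp (h₂.isPendSolOn.mono
      (h07.trans (Icc_subset_Icc_right hTs))) 7 ⟨by norm_num, le_rfl⟩
    rw [h₁.left, h₂.left, sub_self] at this
    simp only [Prod.norm_def, Real.norm_eq_abs, abs_zero, sub_zero, max_le_iff] at this
    rw [max_eq_right (abs_nonneg _)] at this
    have h14 : exp 14 = exp 7 * exp 7 := by rw [← exp_add]; norm_num
    have hprod : |w 7 * z 7| ≤ exp 14 * δ ^ 2 := by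
      rw [abs_mul, h14, ← sq_abs δ]
      calc |w 7| * |z 7| ≤ (|δ| * exp 7) * (|δ| * exp 7) :=
            mul_le_mul this.1 this.2 (abs_nonneg _) (by positivity)
        _ = _ := by ring
    exact neg_le_of_abs_le hprod
  have hescape : δ ^ 2 ≤ w escapeTime * z escapeTime := by
    have hsub' : Icc 7 escapeTime ⊆ Icc 7 T := Icc_subset_Icc_right hT
    have := mul_add_le_mul_of_repulsive (r := 1 / 2) (m := δ ^ 2 / 16) h7B (by norm_num)
      (fun t ht => hw t (hsub (hsub' ht))) (fun t ht => hz t (hsub (hsub' ht)))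
      (fun t ht => hrep t (hsub' ht)) (fun t ht => hsep t (hsub (hsub' ht)))
    unfold escapeTime at this ⊢
    nlinarith
  have hsub' : Icc escapeTime T ⊆ Icc 7 T := Icc_subset_Icc_left h7B
  have hgrowth := mul_exp_sub_one_le_of_repulsive (r := 1 / 2) hT (by norm_num)
    (fun t ht => hw t (hsub (hsub' ht))) (fun t ht => hz t (hsub (hsub' ht)))
    (fun t ht => hrep t (hsub' ht))
  have hexp : 0 ≤ exp (T - escapeTime) - 1 := by
    linarith [add_one_le_exp (T - escapeTime)]
  rw [show 2 * (1 / 2 : ℝ) * (T - escapeTime) = T - escapeTime by ring] at hgrowth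
  nlinarith [mul_le_mul_of_nonneg_right hescape hexp, sq_nonneg (w escapeTime)]

lemma abs_velocity_zero_sub_le (hα : |α| ≤ 1) (hβ : |β - π| < 1) (hT : 2 * escapeTime + 10 ≤ T)
    (hTs : T < s) (h₁ : IsPendLemmaSol α β T x₁ v₁) (h₂ : IsPendLemmaSol α β s x₂ v₂) :
    |v₂ 0 - v₁ 0| ≤ exp (-(1 / 4) * T) * (s - T) := by
  have hB := seven_le_escapeTime
  have hgrowth := h₁.sq_velocity_zero_sub_mul_le hα hβ (by linarith) hTs.le h₂
  have hend : |x₂ T - x₁ T| ≤ 9 / 4 * (s - T) := by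
    have := (convex_Icc 0 s).norm_image_sub_le_of_norm_hasDerivWithin_le
      (fun t ht => (h₂.isPendSolOn t ht).1.hasDerivWithinAt)
      (fun t ht => h₂.abs_velocity_le hα hβ (by linarith) t ht)
      ⟨by linarith, hTs.le⟩ ⟨by linarith, le_rfl⟩
    rwa [h₂.right, Real.norm_eq_abs, Real.norm_eq_abs, abs_of_pos (sub_pos.2 hTs), ← h₁.right,
      abs_sub_comm] at this
  have hsix : 6 ≤ exp (T / 2 - escapeTime) := by
    linarith [add_one_le_exp (T / 2 - escapeTime)]
  have hsplit : exp (T - escapeTime) = exp (T / 4) ^ 2 * exp (T / 2 - escapeTime) := by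
    rw [sq, ← exp_add, ← exp_add]; ring_nf
  have hsq : (|v₂ 0 - v₁ 0| * exp (T / 4)) ^ 2 ≤ (s - T) ^ 2 := by
    have h1 : 1 ≤ exp (T / 4) ^ 2 := one_le_pow₀ (one_le_exp (by linarith))
    rw [hsplit] at hgrowth
    rw [mul_pow, sq_abs]
    nlinarith [sq_abs (x₂ T - x₁ T), abs_nonneg (x₂ T - x₁ T), sq_nonneg (v₂ 0 - v₁ 0),
      mul_le_mul_of_nonneg_left hsix
        (mul_nonneg (sq_nonneg (v₂ 0 - v₁ 0)) (sq_nonneg (exp (T / 4))))]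
  have hlin := (pow_le_pow_iff_left₀ (by positivity) (by linarith) two_ne_zero).1 hsq
  rw [show -(1 / 4) * T = -(T / 4) by ring, exp_neg, ← div_eq_inv_mul, le_div_iff₀ (exp_pos _)]
  linarith

end IsPendLemmaSol

/-- **Exponential smallness of `∂_T ẋ(0; T, α, β)` in the non-winding case.**
There are `c > 0` and `T₀ > 0` such that for `|α| ≤ 1`, `|β − π| < 1`, if for
each `T > 0` the function `x T` (with velocity `v T`) is the unique
Pendulum-Lemma solution of `ẍ + sin x = 0` with `x(0) = α`, `x(T) = β`,
confined to `[α, max(β, π)]`, then for all `T ≥ T₀` the derivative of the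
initial velocity with respect to `T` satisfies `|∂_T ẋ(0; T, α, β)| ≤ e^{−cT}`. -/
theorem exp_decay_initial_velocity :
    ∃ c > (0:ℝ), ∃ T₀ > (0:ℝ), ∀ α β : ℝ, |α| ≤ 1 → |β - Real.pi| < 1 →
      ∀ x v : ℝ → ℝ → ℝ,
      (∀ T, 0 < T →
        IsPendSolOn (x T) (v T) (Set.Icc 0 T) ∧ x T 0 = α ∧ x T T = β ∧
        ∀ t ∈ Set.Icc 0 T, α ≤ x T t ∧ x T t ≤ max β Real.pi) →
      ∀ T, T₀ ≤ T → |deriv (fun s => v s 0) T| ≤ Real.exp (-c * T) := by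
  have h7 := seven_le_escapeTime
  refine ⟨1 / 4, by norm_num, 2 * escapeTime + 10, by linarith, ?_⟩
  intro α β hα hβ x v hsol T hT
  have hsolT : ∀ T, 0 < T → IsPendLemmaSol α β T (x T) (v T) := fun T hT =>
    let ⟨hpend, hleft, hright, hmem⟩ := hsol T hT
    ⟨hpend, hleft, hright, hmem⟩
  have hT₀ : 0 < T := by linarith
  exact abs_deriv_le_of_abs_sub_le (by positivity) fun s hs =>
    (hsolT T hT₀).abs_velocity_zero_sub_le hα hβ hT hs (hsolT s (hT₀.trans hs))
end

section
/- For every E with 0 < E ≤ 1, the period-type integral 𝒯_E = ∫_{−π}^{π} dx / √(2(E + 2 sin²(x/2))) satisfies the bound 𝒯_E ≤ √2 · π · ( ln(1 + √(1 + E)) − ln E ). -/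
/-!
By evenness, `𝒯_E` is twice the integral over `[0, π]`. There Jordan's inequality
`sin (x/2) ≥ x/π` and `(a + b)² ≤ 2 (a² + b²)` bound the integrand by `√2 / (√(2E) + 2x/π)`,
whose integral is `(√2 π / 2) log (1 + 2/√(2E))`. Since `2/√(2E) = √(2E)/E`, the resulting bound
is at most the claimed one iff `E + √(2E) ≤ 1 + √(1 + E)`, which holds for `E ≤ 1`, with
equality at `E = 1`.
-/

open Real intervalIntegral MeasureTheory Set

theorem integral_neg_self_eq_two_mul_of_even {f : ℝ → ℝ} {a : ℝ} (hf : ∀ x, f (-x) = f x)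
    (hint : IntervalIntegrable f volume (-a) a) :
    ∫ x in -a..a, f x = 2 * ∫ x in 0..a, f x := by
  have hzero : (0 : ℝ) ∈ uIcc (-a) a := by
    rw [mem_uIcc]; rcases le_total 0 a with ha | ha
    exacts [Or.inl ⟨by linarith, ha⟩, Or.inr ⟨ha, by linarith⟩]
  have hreflect : ∫ x in -a..0, f x = ∫ x in 0..a, f x := by
    simpa only [neg_zero, hf] using (integral_comp_neg (a := 0) (b := a) f).symm
  rw [← integral_add_adjacent_intervals (hint.mono_set (uIcc_subset_uIcc_left hzero))
    (hint.mono_set (uIcc_subset_uIcc_right hzero)), hreflect, two_mul]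

theorem rpow_neg_half_sq_add_sq_le {a b : ℝ} (hab : 0 < a + b) :
    (a ^ 2 + b ^ 2) ^ (-(1 : ℝ) / 2) ≤ √2 * (a + b)⁻¹ := by
  have hpos : 0 < a ^ 2 + b ^ 2 := by nlinarith [sq_nonneg (a - b), mul_pos hab hab]
  have hqm : a + b ≤ √(a ^ 2 + b ^ 2) * √2 := by
    rw [← sqrt_mul hpos.le]
    exact le_sqrt_of_sq_le (by nlinarith [sq_nonneg (a - b)])
  calc (a ^ 2 + b ^ 2) ^ (-(1 : ℝ) / 2) = (√(a ^ 2 + b ^ 2))⁻¹ := by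
        rw [neg_div, rpow_neg hpos.le, sqrt_eq_rpow]
    _ ≤ ((a + b) / √2)⁻¹ :=
        inv_anti₀ (by positivity) (div_le_of_le_mul₀ (by positivity) (by positivity) hqm)
    _ = √2 * (a + b)⁻¹ := by rw [inv_div, div_eq_mul_inv]

theorem integral_inv_const_add_mul {c k L : ℝ} (hk : k ≠ 0) (hc : 0 < c) (hcL : 0 < c + k * L) :
    ∫ x in 0..L, (c + k * x)⁻¹ = k⁻¹ * log ((c + k * L) / c) := by
  rw [integral_comp_add_mul (fun x => x⁻¹) hk, mul_zero, add_zero, integral_inv_of_pos hc hcL,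
    smul_eq_mul]

theorem add_sqrt_two_mul_le_one_add_sqrt_one_add {E : ℝ} (hE0 : 0 ≤ E) (hE1 : E ≤ 1) :
    E + √(2 * E) ≤ 1 + √(1 + E) := by
  set s := √(2 * E)
  have hs0 : 0 ≤ s := sqrt_nonneg _
  have hE : E = s ^ 2 / 2 := by rw [sq_sqrt (by positivity)]; ring
  have hs2 : s ^ 2 ≤ 2 := by linarith
  rw [hE, ← sub_le_iff_le_add']
  apply le_sqrt_of_sq_le
  have hfactor : 1 + s ^ 2 / 2 - (s ^ 2 / 2 + s - 1) ^ 2 = s * (2 - s ^ 2) * (s / 4 + 1) := by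
    ring
  have : 0 ≤ s * (2 - s ^ 2) * (s / 4 + 1) := by
    have := sub_nonneg.2 hs2
    positivity
  linarith

theorem log_sqrt_two_mul_add_two_div_self_le {E : ℝ} (hE0 : 0 < E) (hE1 : E ≤ 1) :
    log ((√(2 * E) + 2) / √(2 * E)) ≤ log (1 + √(1 + E)) - log E := by
  have hc : 0 < √(2 * E) := sqrt_pos.2 (by positivity)
  have hcE : (√(2 * E) + 2) / √(2 * E) = (E + √(2 * E)) / E := by
    rw [div_eq_div_iff hc.ne' hE0.ne']
    nlinarith [sq_sqrt (by positivity : (0 : ℝ) ≤ 2 * E)]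
  rw [hcE, ← log_div (by positivity) hE0.ne']
  gcongr log (?_ / E)
  exact add_sqrt_two_mul_le_one_add_sqrt_one_add hE0.le hE1

theorem continuous_pendulum_integrand {E : ℝ} (hE : 0 < E) :
    Continuous fun x : ℝ => (2 * (E + 2 * sin (x / 2) ^ 2)) ^ (-(1 : ℝ) / 2) :=
  (by fun_prop : Continuous fun x : ℝ => 2 * (E + 2 * sin (x / 2) ^ 2)).rpow_const
    fun _ => Or.inl (by positivity)

theorem pendulum_integrand_le {E x : ℝ} (hE : 0 < E) (hx0 : 0 ≤ x) (hxπ : x ≤ π) :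
    (2 * (E + 2 * sin (x / 2) ^ 2)) ^ (-(1 : ℝ) / 2) ≤ √2 * (√(2 * E) + 2 / π * x)⁻¹ := by
  have hjordan : 2 / π * (x / 2) ≤ sin (x / 2) := mul_le_sin (by positivity) (by linarith)
  have hsq : (2 / π * x) ^ 2 ≤ 4 * sin (x / 2) ^ 2 := by
    have : 0 ≤ 2 / π * (x / 2) := by positivity
    nlinarith
  calc (2 * (E + 2 * sin (x / 2) ^ 2)) ^ (-(1 : ℝ) / 2)
      ≤ (√(2 * E) ^ 2 + (2 / π * x) ^ 2) ^ (-(1 : ℝ) / 2) := by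
        refine rpow_le_rpow_of_nonpos (by positivity) ?_ (by norm_num)
        rw [sq_sqrt (by positivity)]
        linarith
    _ ≤ √2 * (√(2 * E) + 2 / π * x)⁻¹ :=
        rpow_neg_half_sq_add_sq_le (by positivity)

/-- **Bound on the period of a rotating pendulum solution.** For `0 < E ≤ 1`,
the time of one full revolution `𝒯_E = ∫_{−π}^{π} dx/√(2(E + 2 sin²(x/2)))`
satisfies `𝒯_E ≤ √2 · π · (ln(1 + √(1 + E)) − ln E)`. -/
theorem period_integral_bound (E : ℝ) (hE0 : 0 < E) (hE1 : E ≤ 1) :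
    (∫ x in (-Real.pi)..Real.pi,
        (2 * (E + 2 * Real.sin (x / 2) ^ 2)) ^ (-(1:ℝ)/2)) ≤
      Real.sqrt 2 * Real.pi *
        (Real.log (1 + Real.sqrt (1 + E)) - Real.log E) := by
  set c := √(2 * E)
  have hc : 0 < c := sqrt_pos.2 (by positivity)
  have hcont := continuous_pendulum_integrand hE0
  have hbound_int : IntervalIntegrable (fun x => √2 * (c + 2 / π * x)⁻¹) volume 0 π := by
    refine (intervalIntegrable_inv (fun x hx => ?_) (by fun_prop)).const_mul _
    rw [uIcc_of_le pi_pos.le] at hx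
    have := hx.1
    positivity
  calc (∫ x in -π..π, (2 * (E + 2 * sin (x / 2) ^ 2)) ^ (-(1 : ℝ) / 2))
      = 2 * ∫ x in 0..π, (2 * (E + 2 * sin (x / 2) ^ 2)) ^ (-(1 : ℝ) / 2) :=
        integral_neg_self_eq_two_mul_of_even (fun x => by rw [neg_div, sin_neg, neg_sq])
          (hcont.intervalIntegrable _ _)
    _ ≤ 2 * ∫ x in 0..π, √2 * (c + 2 / π * x)⁻¹ := by
        gcongr
        exact integral_mono_on pi_pos.le (hcont.intervalIntegrable _ _) hbound_int
          fun x hx => pendulum_integrand_le hE0 hx.1 hx.2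
    _ = √2 * π * log ((c + 2) / c) := by
        rw [intervalIntegral.integral_const_mul, integral_inv_const_add_mul (by positivity) hc
          (by positivity), div_mul_cancel₀ _ pi_pos.ne', inv_div]
        ring
    _ ≤ √2 * π * (log (1 + √(1 + E)) - log E) := by
        gcongr
        exact log_sqrt_two_mul_add_two_div_self_le hE0 hE1
end

section
/- Let 0 < ε ≤ 1/16 and let γ = (γ₁, γ₂, γ₃, γ₄) : [0, t*] → ℝ⁴ be a C¹ curve such that |γ̇(t)| ≤ 2 for all t, γ̇₃(t) ≥ 1 whenever |γ₃(t)| ≤ √ε, and γ starts on the set {x₁² + x₂² = ε, x₃ = 0}, i.e. γ₁(0)² + γ₂(0)² = ε and γ₃(0) = 0. Then γ never enters the lens {x ∈ ℝ⁴ : x₁² + x₂² + x₃² ≤ ε²}: for every t ∈ [0, t*], γ₁(t)² + γ₂(t)² + γ₃(t)² > ε². -/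
/-!
The third coordinate rises at unit rate until it reaches `√ε`, so at time `t` it is at least
`min t √ε`; meanwhile the speed bound keeps the projection to the `x₁x₂`-plane at distance at
least `√ε - 2t` from the origin. Whichever of the two is small, the other one is not:
`(√ε - 2t)² + t² ≥ ε / 5`, and `ε / 5 > ε²` because `ε < 1/5`.
-/

open Set Filter Topology

namespace EuclideanSpace

variable {ι : Type*} [Fintype ι] [DecidableEq ι]

theorem sq_add_sq_le_norm_sq (x : EuclideanSpace ℝ ι) {i j : ι} (hij : i ≠ j) :
    x i ^ 2 + x j ^ 2 ≤ ‖x‖ ^ 2 := by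
  rw [real_norm_sq_eq, ← Finset.sum_pair (f := fun k => x k ^ 2) hij]
  exact Finset.sum_le_univ_sum_of_nonneg fun k => sq_nonneg (x k)

theorem norm_two_eq_sqrt (a b : ℝ) : ‖!₂[a, b]‖ = √(a ^ 2 + b ^ 2) := by
  simp [EuclideanSpace.norm_eq, Fin.sum_univ_two]

theorem sqrt_sq_add_sq_sub_norm_sub_le (x y : EuclideanSpace ℝ ι) {i j : ι} (hij : i ≠ j) :
    √(y i ^ 2 + y j ^ 2) - ‖x - y‖ ≤ √(x i ^ 2 + x j ^ 2) := by
  have hproj : ‖!₂[x i, x j] - !₂[y i, y j]‖ ≤ ‖x - y‖ := by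
    have : !₂[x i, x j] - !₂[y i, y j] = !₂[(x - y) i, (x - y) j] := by
      ext k; fin_cases k <;> simp
    rw [this, norm_two_eq_sqrt]
    exact (Real.sqrt_le_left (norm_nonneg _)).2 (sq_add_sq_le_norm_sq _ hij)
  rw [← norm_two_eq_sqrt, ← norm_two_eq_sqrt]
  linarith [norm_sub_norm_le !₂[y i, y j] !₂[x i, x j], norm_sub_rev (!₂[y i, y j]) !₂[x i, x j]]

end EuclideanSpace

theorem slope_min_mul_le {c s x z : ℝ} (hc : 0 ≤ c) (hxz : x < z) :
    slope (fun u => min (c * u) s) x z ≤ c := by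
  rw [slope_def_field, div_le_iff₀ (sub_pos.2 hxz)]
  rcases le_total (c * x) s with h | h
  · rw [min_eq_left h]; linarith [min_le_left (c * z) s]
  · rw [min_eq_right h]; nlinarith [min_le_right (c * z) s]

theorem min_mul_le_of_lt_deriv {g g' : ℝ → ℝ} {c s T : ℝ} (hc : 0 ≤ c) (hs : 0 ≤ s)
    (hg : ∀ u ∈ Icc 0 T, HasDerivAt g (g' u) u) (h0 : 0 ≤ g 0)
    (hrise : ∀ u ∈ Icc 0 T, g u ∈ Icc 0 s → c < g' u) :
    ∀ u ∈ Icc 0 T, min (c * u) s ≤ g u :=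
  image_le_of_liminf_slope_right_lt_deriv_boundary' (f' := fun _ => c)
    ((continuous_const.mul continuous_id).min continuous_const).continuousOn
    (fun _ _ _ hr => Eventually.frequently <|
      eventually_nhdsWithin_of_forall fun _ hz => (slope_min_mul_le hc hz).trans_lt hr)
    (by simpa [hs] using h0)
    (fun x hx => (hg x hx).continuousAt.continuousWithinAt)
    (fun x hx => (hg x (Ico_subset_Icc_self hx)).hasDerivWithinAt)
    (fun x hx hfx => hrise x (Ico_subset_Icc_self hx)
      ⟨hfx ▸ le_min (mul_nonneg hc hx.1) hs, hfx ▸ min_le_right _ _⟩)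

theorem min_le_of_one_le_deriv {g g' : ℝ → ℝ} {s T : ℝ} (hs : 0 ≤ s)
    (hg : ∀ u ∈ Icc 0 T, HasDerivAt g (g' u) u) (h0 : 0 ≤ g 0)
    (hrise : ∀ u ∈ Icc 0 T, g u ∈ Icc 0 s → 1 ≤ g' u) :
    ∀ u ∈ Icc 0 T, min u s ≤ g u := by
  intro u hu
  have hlim : Tendsto (fun c => min (c * u) s) (𝓝[<] 1) (𝓝 (min u s)) := by
    simpa using (((continuous_id.mul continuous_const).min continuous_const).tendsto
      (1 : ℝ)).mono_left nhdsWithin_le_nhds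
  refine le_of_tendsto hlim ?_
  filter_upwards [Ioo_mem_nhdsLT zero_lt_one] with c hc
  exact min_mul_le_of_lt_deriv hc.1.le hs hg h0
    (fun v hv hgv => hc.2.trans_le (hrise v hv hgv)) u hu

theorem sq_div_five_le_sq_add_min_sq {r s t : ℝ} (hr : 0 ≤ r) (ht : 0 ≤ t)
    (hrst : s - 2 * t ≤ r) : s ^ 2 / 5 ≤ r ^ 2 + min t s ^ 2 := by
  rcases le_total t s with h | h
  · rw [min_eq_left h]
    rcases le_total (2 * t) s with h' | h'
    · nlinarith [sq_nonneg (2 * s - 5 * t)]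
    · nlinarith
  · rw [min_eq_right h]; nlinarith

theorem lens_avoidance_general (ε tst : ℝ) (hε0 : 0 < ε) (hε : ε ≤ 1/16)
    (γ γ' : ℝ → EuclideanSpace ℝ (Fin 4))
    (hderiv : ∀ t ∈ Set.Icc 0 tst, HasDerivAt γ (γ' t) t)
    (hspeed : ∀ t ∈ Set.Icc 0 tst, ‖γ' t‖ ≤ 2)
    (hx3 : ∀ t ∈ Set.Icc 0 tst, |γ t 2| ≤ Real.sqrt ε → 1 ≤ γ' t 2)
    (hstart1 : (γ 0 0) ^ 2 + (γ 0 1) ^ 2 = ε) (hstart2 : γ 0 2 = 0) :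
    ∀ t ∈ Set.Icc 0 tst,
      ε ^ 2 < (γ t 0) ^ 2 + (γ t 1) ^ 2 + (γ t 2) ^ 2 := by
  intro t ht
  have hs : √ε ^ 2 = ε := Real.sq_sqrt hε0.le
  have hrise : min t √ε ≤ γ t 2 :=
    min_le_of_one_le_deriv (Real.sqrt_nonneg ε)
      (fun u hu => (EuclideanSpace.proj (2 : Fin 4)).hasFDerivAt.comp_hasDerivAt u (hderiv u hu))
      hstart2.ge (fun u hu hgu => hx3 u hu (abs_le.2 ⟨by linarith [hgu.1, Real.sqrt_nonneg ε], hgu.2⟩))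
      t ht
  have hdisp : ‖γ t - γ 0‖ ≤ 2 * t := by
    simpa [abs_of_nonneg ht.1] using
      (convex_Icc 0 tst).norm_image_sub_le_of_norm_hasDerivWithin_le
        (fun u hu => (hderiv u hu).hasDerivWithinAt) hspeed (left_mem_Icc.2 (ht.1.trans ht.2)) ht
  have hplanar : √ε - 2 * t ≤ √(γ t 0 ^ 2 + γ t 1 ^ 2) := by
    have := EuclideanSpace.sqrt_sq_add_sq_sub_norm_sub_le (γ t) (γ 0) (i := 0) (j := 1) (by decide)
    rw [hstart1] at this
    linarith
  have hfloor := sq_div_five_le_sq_add_min_sq (Real.sqrt_nonneg _) ht.1 hplanar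
  rw [hs, Real.sq_sqrt (by positivity)] at hfloor
  have hmin : min t √ε ^ 2 ≤ γ t 2 ^ 2 :=
    pow_le_pow_left₀ (le_min ht.1 (Real.sqrt_nonneg ε)) hrise 2
  nlinarith

/-- **Lens avoidance.** Let `0 < ε ≤ 1/16` and let `γ : [0, t*] → ℝ⁴` be a C¹
curve with speed at most `2`, with `γ̇₃(t) ≥ 1` whenever `|γ₃(t)| ≤ √ε`, and
starting on the set `{x₁² + x₂² = ε, x₃ = 0}`.  Then `γ` never enters the lens
`{x₁² + x₂² + x₃² ≤ ε²}`.  (Coordinates: `0 ↦ x₁`, `1 ↦ x₂`, `2 ↦ x₃`, `3 ↦ x₄`.) -/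
theorem lens_avoidance (ε tst : ℝ) (hε0 : 0 < ε) (hε : ε ≤ 1/16) (htst : 0 ≤ tst)
    (γ γ' : ℝ → EuclideanSpace ℝ (Fin 4))
    (hderiv : ∀ t ∈ Set.Icc 0 tst, HasDerivAt γ (γ' t) t)
    (hcont : ContinuousOn γ' (Set.Icc 0 tst))
    (hspeed : ∀ t ∈ Set.Icc 0 tst, ‖γ' t‖ ≤ 2)
    (hx3 : ∀ t ∈ Set.Icc 0 tst, |γ t 2| ≤ Real.sqrt ε → 1 ≤ γ' t 2)
    (hstart1 : (γ 0 0) ^ 2 + (γ 0 1) ^ 2 = ε) (hstart2 : γ 0 2 = 0) :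
    ∀ t ∈ Set.Icc 0 tst,
      ε ^ 2 < (γ t 0) ^ 2 + (γ t 1) ^ 2 + (γ t 2) ^ 2 :=
  lens_avoidance_general ε tst hε0 hε γ γ' hderiv hspeed hx3 hstart1 hstart2
end
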